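/- For every natural number n ≥ 2, ∑_{k=1}^{n-1} k·H_k·H_{n-k} = C(n+1,2)·(H_{n+1}² - H_{n+1}^{(2)} - 2H_{n+1} + 2), where C(n+1,2) = n(n+1)/2. -/

import Mathlib

/-!
With `D n = ∑_{a+b=n} H_a H_b`, the symmetry `a ↔ b` turns the weighted sum into `(n/2) · D n`.
Raising `b` by one shows `D (n+1) = D n + ∑_{a+b=n} H_a/(b+1)`, and that inner sum equals
`H_{n+1}² - H_{n+1}^{(2)}`: it grows by `∑_{a+b=n} 1/((a+1)(b+1)) = 2 H_{n+1}/(n+2)` (partial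
fractions), exactly as `H_{n+1}² - H_{n+1}^{(2)}` does. Both closed forms then follow by induction.
-/

open Finset

noncomputable def H (n : ℕ) : ℝ := ∑ i ∈ Finset.range n, (1 : ℝ) / (i + 1)

noncomputable def H2 (n : ℕ) : ℝ := ∑ i ∈ Finset.range n, (1 : ℝ) / ((i + 1) ^ 2)

open Finset.Nat

@[simp] lemma H_zero : H 0 = 0 := by simp [H]

lemma H_succ (n : ℕ) : H (n + 1) = H n + 1 / (n + 1) := by
  simp [H, sum_range_succ]

lemma H2_succ (n : ℕ) : H2 (n + 1) = H2 n + 1 / ((n : ℝ) + 1) ^ 2 := by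
  simp [H2, sum_range_succ]

lemma sum_antidiagonal_one_div_fst_add_one (n : ℕ) :
    ∑ p ∈ antidiagonal n, (1 : ℝ) / (p.1 + 1) = H (n + 1) :=
  sum_antidiagonal_eq_sum_range_succ (fun i _ => (1 : ℝ) / (i + 1)) n

lemma sum_antidiagonal_one_div_mul (n : ℕ) :
    ∑ p ∈ antidiagonal n, (1 : ℝ) / ((p.1 + 1) * (p.2 + 1)) = 2 * H (n + 1) / (n + 2) := by
  have partial_fractions : ∀ p ∈ antidiagonal n, (1 : ℝ) / ((p.1 + 1) * (p.2 + 1))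
      = (1 / (p.1 + 1) + 1 / (p.2 + 1)) / (n + 2) := by
    rintro ⟨a, b⟩ hab
    rw [HasAntidiagonal.mem_antidiagonal] at hab
    subst hab
    push_cast
    field_simp
    ring
  have sum_snd : ∑ p ∈ antidiagonal n, (1 : ℝ) / (p.2 + 1) = H (n + 1) := by
    rw [← sum_antidiagonal_swap]
    exact sum_antidiagonal_one_div_fst_add_one n
  rw [sum_congr rfl partial_fractions, ← sum_div, sum_add_distrib,
    sum_antidiagonal_one_div_fst_add_one, sum_snd]
  ring

lemma sum_antidiagonal_H_div (n : ℕ) :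
    ∑ p ∈ antidiagonal n, H p.1 / (p.2 + 1) = H (n + 1) ^ 2 - H2 (n + 1) := by
  induction n with
  | zero => simp [H, H2]
  | succ n ih =>
    have step : ∀ p ∈ antidiagonal n, H (p.1 + 1) / (p.2 + 1)
        = H p.1 / (p.2 + 1) + 1 / ((p.1 + 1) * (p.2 + 1)) := by
      intro p _
      rw [H_succ]
      field_simp
    rw [sum_antidiagonal_succ, H_zero, zero_div, zero_add, sum_congr rfl step, sum_add_distrib,
      ih, sum_antidiagonal_one_div_mul, H_succ (n + 1), H2_succ (n + 1)]
    push_cast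
    field_simp
    ring

lemma sum_antidiagonal_H_mul_H (n : ℕ) :
    ∑ p ∈ antidiagonal n, H p.1 * H p.2
      = (n + 1) * (H (n + 1) ^ 2 - H2 (n + 1) - 2 * H (n + 1) + 2) := by
  induction n with
  | zero => simp [H, H2]
  | succ n ih =>
    have step : ∀ p ∈ antidiagonal n, H p.1 * H (p.2 + 1)
        = H p.1 * H p.2 + H p.1 / (p.2 + 1) := by
      intro p _
      rw [H_succ]
      ring
    rw [sum_antidiagonal_succ', H_zero, mul_zero, zero_add, sum_congr rfl step, sum_add_distrib,
      ih, sum_antidiagonal_H_div, H_succ (n + 1), H2_succ (n + 1)]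
    push_cast
    field_simp
    ring

lemma two_mul_sum_antidiagonal_fst_mul {R : Type*} [CommSemiring R] (f : ℕ → R) (n : ℕ) :
    2 * ∑ p ∈ antidiagonal n, (p.1 : R) * f p.1 * f p.2
      = n * ∑ p ∈ antidiagonal n, f p.1 * f p.2 := by
  have swapped : ∑ p ∈ antidiagonal n, (p.1 : R) * f p.1 * f p.2
      = ∑ p ∈ antidiagonal n, (p.2 : R) * f p.1 * f p.2 := by
    rw [← sum_antidiagonal_swap]
    exact sum_congr rfl fun p _ => by simp only [Prod.fst_swap, Prod.snd_swap]; ring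
  rw [two_mul]
  nth_rw 2 [swapped]
  rw [← sum_add_distrib, mul_sum]
  refine sum_congr rfl fun p hp => ?_
  rw [mul_assoc, mul_assoc, ← add_mul, ← Nat.cast_add, HasAntidiagonal.mem_antidiagonal.mp hp]

theorem sum_k_harmonic_conv_general (n : ℕ) :
    ∑ k ∈ Finset.Icc 1 (n - 1), (k : ℝ) * H k * H (n - k)
      = ((n + 1).choose 2 : ℝ) * (H (n + 1) ^ 2 - H2 (n + 1) - 2 * H (n + 1) + 2) := by
  have boundary_terms_vanish : ∑ k ∈ Icc 1 (n - 1), (k : ℝ) * H k * H (n - k)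
      = ∑ k ∈ range (n + 1), (k : ℝ) * H k * H (n - k) := by
    refine sum_subset (fun k hk => ?_) (fun k hk hk' => ?_)
    · simp only [mem_Icc, mem_range] at hk ⊢
      omega
    · simp only [mem_Icc, mem_range] at hk hk'
      obtain rfl | rfl : k = 0 ∨ k = n := by omega
      all_goals simp
  have symmetry := two_mul_sum_antidiagonal_fst_mul H n
  rw [sum_antidiagonal_H_mul_H,
    sum_antidiagonal_eq_sum_range_succ (fun a b => (a : ℝ) * H a * H b)] at symmetry
  rw [boundary_terms_vanish, Nat.cast_choose_two]
  push_cast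
  linarith

theorem sum_k_harmonic_conv (n : ℕ) (hn : 2 ≤ n) :
    ∑ k ∈ Finset.Icc 1 (n - 1), (k : ℝ) * H k * H (n - k)
      = ((n + 1).choose 2 : ℝ) * (H (n + 1) ^ 2 - H2 (n + 1) - 2 * H (n + 1) + 2) :=
  sum_k_harmonic_conv_general n
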